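/- Consider the Mansfield–Marí Beffa–Wang equation: 𝔽¹ = u¹₀·u²₀, 𝔽² = u¹₋₁/u¹₀ − u¹₀/u¹₁. Then the matrices M̂ = [[λ − u²₀, 1/u¹₀],[−u¹₀, 0]] and Û = [[0, −1/u¹₀],[u¹₋₁, λ]] form an MLR for this equation: D_t(M̂) = S(Û)·M̂ − M̂·Û. -/

import Mathlib

open MvPolynomial

/-- Variables: `none` is `λ`; `some (j, ℓ)` is `u^j_ℓ`. -/
abbrev VarC := Option (Fin 2 × ℤ)

/-- Polynomial ring over `K` in `λ`, `u¹_ℓ`, `u²_ℓ`. -/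
abbrev PolyC (K : Type) [Field K] := MvPolynomial VarC K

/-- Field of rational functions over `K` in `λ`, `u¹_ℓ`, `u²_ℓ`. -/
abbrev FC (K : Type) [Field K] := FractionRing (PolyC K)

/-- The spectral parameter `λ`. -/
noncomputable def lam (K : Type) [Field K] : FC K :=
  algebraMap (PolyC K) (FC K) (X none)

/-- The variable `u¹_ℓ`. -/
noncomputable def U1 (K : Type) [Field K] (ℓ : ℤ) : FC K :=
  algebraMap (PolyC K) (FC K) (X (some (0, ℓ)))

/-- The variable `u²_ℓ`. -/
noncomputable def U2 (K : Type) [Field K] (ℓ : ℤ) : FC K :=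
  algebraMap (PolyC K) (FC K) (X (some (1, ℓ)))

/-- `𝔽¹ = u¹₀·u²₀` of the Mansfield–Marí Beffa–Wang equation. -/
noncomputable def Feq1 (K : Type) [Field K] : FC K := U1 K 0 * U2 K 0

/-- `𝔽² = u¹₋₁/u¹₀ − u¹₀/u¹₁` of the Mansfield–Marí Beffa–Wang equation. -/
noncomputable def Feq2 (K : Type) [Field K] : FC K := U1 K (-1) / U1 K 0 - U1 K 0 / U1 K 1

/-!
`D_t` is a derivation, so its action on the entries of `M̂` is determined by the Leibniz rule and
the values `D_t(u¹₀) = u¹₀u²₀`, `D_t(u²₀) = u¹₋₁/u¹₀ − u¹₀/u¹₁`, while `S(Û)` only shifts indices.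
Both sides of the zero-curvature equation then become explicit matrices of rational functions in
`λ, u¹₋₁, u¹₀, u¹₁, u²₀` that agree entrywise; moreover `det M̂ = 1`.
-/

-- The `Algebra ℤ A` instance is a parameter so that it can be the one `FractionRing` carries,
-- which is not syntactically `Ring.toIntAlgebra`.
def Derivation.ofLeibniz {A : Type*} [CommRing A] [Algebra ℤ A] (D : A → A)
    (hadd : ∀ x y, D (x + y) = D x + D y) (hmul : ∀ x y, D (x * y) = x * D y + D x * y) :
    Derivation ℤ A A where
  toFun := D
  map_add' := hadd
  map_smul' n x := by
    rw [Algebra.smul_def, eq_intCast, ← zsmul_eq_mul]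
    exact (AddMonoidHom.mk' D hadd).map_zsmul n x
  map_one_eq_zero' := by simpa using hmul 1 1
  leibniz' a b := by simp [hmul, mul_comm]

theorem Matrix.map_fin_two {α β : Type*} (f : α → β) (a b c d : α) :
    (!![a, b; c, d] : Matrix (Fin 2) (Fin 2) α).map f = !![f a, f b; f c, f d] := by
  ext i j; fin_cases i <;> fin_cases j <;> rfl

theorem Matrix.sub_fin_two {α : Type*} [Sub α] (a b c d e f g h : α) :
    (!![a, b; c, d] : Matrix (Fin 2) (Fin 2) α) - !![e, f; g, h] =
      !![a - e, b - f; c - g, d - h] := by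
  ext i j; fin_cases i <;> fin_cases j <;> rfl

section

variable (K : Type) [Field K]

theorem U1_ne_zero (ℓ : ℤ) : U1 K ℓ ≠ 0 :=
  (map_ne_zero_iff _ (IsFractionRing.injective (PolyC K) (FC K))).mpr (X_ne_zero _)

theorem Mhat_det :
    (!![lam K - U2 K 0, 1 / U1 K 0; -U1 K 0, 0] : Matrix (Fin 2) (Fin 2) (FC K)).det = 1 := by
  rw [Matrix.det_fin_two_of]
  field_simp [U1_ne_zero K 0]
  ring

theorem Uhat_map_shift (S : FC K ≃+* FC K) (hSlam : S (lam K) = lam K)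
    (hSu1 : ∀ ℓ : ℤ, S (U1 K ℓ) = U1 K (ℓ + 1)) :
    (!![0, -(1 / U1 K 0); U1 K (-1), lam K] : Matrix (Fin 2) (Fin 2) (FC K)).map S =
      !![0, -(1 / U1 K 1); U1 K 0, lam K] := by
  simp [Matrix.map_fin_two, hSlam, hSu1]

theorem Mhat_map_derivation (S : FC K ≃+* FC K) (D : Derivation ℤ (FC K) (FC K))
    (hDlam : D (lam K) = 0)
    (hDu1 : ∀ ℓ : ℤ, D (U1 K ℓ) = (S ^ ℓ) (Feq1 K))
    (hDu2 : ∀ ℓ : ℤ, D (U2 K ℓ) = (S ^ ℓ) (Feq2 K)) :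
    (!![lam K - U2 K 0, 1 / U1 K 0; -U1 K 0, 0] : Matrix (Fin 2) (Fin 2) (FC K)).map D =
      !![U1 K 0 / U1 K 1 - U1 K (-1) / U1 K 0, -(U2 K 0 / U1 K 0); -(U1 K 0 * U2 K 0), 0] := by
  have hu := U1_ne_zero K 0
  have h1 : D (U1 K 0) = U1 K 0 * U2 K 0 := hDu1 0
  have h2 : D (U2 K 0) = U1 K (-1) / U1 K 0 - U1 K 0 / U1 K 1 := hDu2 0
  have hinv : (U1 K 0)⁻¹ ^ 2 • (U1 K 0 * U2 K 0) = U2 K 0 / U1 K 0 := by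
    rw [smul_eq_mul]
    field_simp
  rw [Matrix.map_fin_two, map_sub, map_neg, one_div, D.leibniz_inv, hDlam, h1, h2, D.map_zero,
    neg_smul, hinv, zero_sub, neg_sub]

end

theorem stmt_16_general (K : Type) [Field K]
    (S : FC K ≃+* FC K)
    (hSlam : S (lam K) = lam K)
    (hSu1 : ∀ ℓ : ℤ, S (U1 K ℓ) = U1 K (ℓ + 1))
    (Dt : FC K → FC K)
    (hDadd : ∀ x y, Dt (x + y) = Dt x + Dt y)
    (hDmul : ∀ x y, Dt (x * y) = x * Dt y + Dt x * y)
    (hDlam : Dt (lam K) = 0)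
    (hDu1 : ∀ ℓ : ℤ, Dt (U1 K ℓ) = (S ^ ℓ) (Feq1 K))
    (hDu2 : ∀ ℓ : ℤ, Dt (U2 K ℓ) = (S ^ ℓ) (Feq2 K)) :
    (!![lam K - U2 K 0, 1 / U1 K 0; -U1 K 0, 0] : Matrix (Fin 2) (Fin 2) (FC K)).det ≠ 0 ∧
    (!![lam K - U2 K 0, 1 / U1 K 0; -U1 K 0, 0] : Matrix (Fin 2) (Fin 2) (FC K)).map Dt =
      (!![0, -(1 / U1 K 0); U1 K (-1), lam K] : Matrix (Fin 2) (Fin 2) (FC K)).map ⇑S *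
        !![lam K - U2 K 0, 1 / U1 K 0; -U1 K 0, 0] -
      !![lam K - U2 K 0, 1 / U1 K 0; -U1 K 0, 0] *
        !![0, -(1 / U1 K 0); U1 K (-1), lam K] := by
  refine ⟨by rw [Mhat_det]; exact one_ne_zero, ?_⟩
  let D := Derivation.ofLeibniz Dt hDadd hDmul
  rw [show Dt = D from rfl, Mhat_map_derivation K S D hDlam hDu1 hDu2,
    Uhat_map_shift K S hSlam hSu1, Matrix.mul_fin_two, Matrix.mul_fin_two, Matrix.sub_fin_two]
  ext i j
  fin_cases i <;> fin_cases j <;> simp [U1_ne_zero] <;> ring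

/-- `F` is the field of rational functions over a char-0 field `K` in `λ, u¹_ℓ, u²_ℓ`; `S` is
the field automorphism over `K` fixing `λ` with `S(u^j_ℓ) = u^j_{ℓ+1}`, and `D_t` is the
total derivative of the Mansfield–Marí Beffa–Wang equation `∂_t u^j = 𝔽^j` (the unique
derivation with `D_t(λ) = 0`, `D_t(u^j_ℓ) = S^ℓ(𝔽^j)`); both are quantified by these
characterizing properties.  Claim: the matrices `M̂ = [[λ − u²₀, 1/u¹₀],[−u¹₀, 0]]` and
`Û = [[0, −1/u¹₀],[u¹₋₁, λ]]` form an MLR: `det M̂ ≠ 0` and `D_t(M̂) = S(Û)·M̂ − M̂·Û`. -/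
theorem stmt_16 (K : Type) [Field K] [CharZero K]
    (S : FC K ≃+* FC K)
    (hSK : ∀ x : K, S (algebraMap K (FC K) x) = algebraMap K (FC K) x)
    (hSlam : S (lam K) = lam K)
    (hSu1 : ∀ ℓ : ℤ, S (U1 K ℓ) = U1 K (ℓ + 1))
    (hSu2 : ∀ ℓ : ℤ, S (U2 K ℓ) = U2 K (ℓ + 1))
    (Dt : FC K → FC K)
    (hDadd : ∀ x y, Dt (x + y) = Dt x + Dt y)
    (hDmul : ∀ x y, Dt (x * y) = x * Dt y + Dt x * y)
    (hDK : ∀ x : K, Dt (algebraMap K (FC K) x) = 0)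
    (hDlam : Dt (lam K) = 0)
    (hDu1 : ∀ ℓ : ℤ, Dt (U1 K ℓ) = (S ^ ℓ) (Feq1 K))
    (hDu2 : ∀ ℓ : ℤ, Dt (U2 K ℓ) = (S ^ ℓ) (Feq2 K)) :
    (!![lam K - U2 K 0, 1 / U1 K 0; -U1 K 0, 0] : Matrix (Fin 2) (Fin 2) (FC K)).det ≠ 0 ∧
    (!![lam K - U2 K 0, 1 / U1 K 0; -U1 K 0, 0] : Matrix (Fin 2) (Fin 2) (FC K)).map Dt =
      (!![0, -(1 / U1 K 0); U1 K (-1), lam K] : Matrix (Fin 2) (Fin 2) (FC K)).map ⇑S *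
        !![lam K - U2 K 0, 1 / U1 K 0; -U1 K 0, 0] -
      !![lam K - U2 K 0, 1 / U1 K 0; -U1 K 0, 0] *
        !![0, -(1 / U1 K 0); U1 K (-1), lam K] :=
  stmt_16_general K S hSlam hSu1 Dt hDadd hDmul hDlam hDu1 hDu2
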